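/- Let $\mathbb{C}[x_1,\ldots,x_m]$ and the simple ideal $J = \langle x_1,\ldots,x_p, x_{p+1}x_{r+1},\ldots,x_r x_{2r-p}\rangle$. In the $x_r$-direction chart of the blow-up of $V_1 = \{x_1=\cdots=x_r=0\}$, i.e., under the ring map $\psi$ sending $x_j \mapsto \tilde{x}_j x_r$ for $1 \leq j \leq r-1$ and $x_j \mapsto x_j$ otherwise, the ideal generated by $\psi(J)$ equals $x_r \cdot \langle \tilde{x}_1,\ldots,\tilde{x}_p, \tilde{x}_{p+1}x_{r+1},\ldots,\tilde{x}_{r-1}x_{2r-p-1}, \tilde{x}_{2r-p}\rangle$, i.e., the product of the principal ideal $\langle x_r\rangle$ with another simple ideal. -/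

import Mathlib

/-!
The chart map multiplies every generator of `J` by `x_r`, except the last product
`x_r x_{2r-p}`, which it fixes since neither factor is rescaled; that generator already
carries the factor `x_r`. So the image of the generating set is `x_r` times the generating
set of the new simple ideal.
-/

open MvPolynomial

theorem Ideal.map_span_eq_span_singleton_mul {R S F : Type*} [CommSemiring R] [CommSemiring S]
    [FunLike F R S] [RingHomClass F R S] (f : F) {s : Set R} {a : S} {t : Set S}
    (h : f '' s = (a * ·) '' t) :
    Ideal.map f (Ideal.span s) = Ideal.span {a} * Ideal.span t := by
  rw [Ideal.map_span, h, Ideal.span_mul_span', Set.singleton_mul]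

/-- In the `x_r`-chart of the blow-up of `V₁ = {x₁ = ⋯ = x_r = 0}`, i.e. under the
ring map `ψ` with `x_j ↦ x̃_j·x_r` for `1 ≤ j ≤ r-1` and `x_j ↦ x_j` otherwise, the
total transform of the simple ideal `J = ⟨x₁,…,x_p, x_{p+1}x_{r+1},…,x_r x_{2r-p}⟩`
factors as `⟨x_r⟩ · ⟨x̃₁,…,x̃_p, x̃_{p+1}x_{r+1},…,x̃_{r-1}x_{2r-p-1}, x_{2r-p}⟩`,
the exceptional-divisor ideal times another simple ideal.  (Variables indexed by
`Fin m`, with `x_i` corresponding to index `i-1`.) -/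
theorem blowup_chart_xr (m p r : ℕ) (hpr : p < r) (hrm : r ≤ m)
    (h2 : 2 * r - p ≤ m) :
    Ideal.map
      (MvPolynomial.aeval (fun j : Fin m =>
          if (j : ℕ) < r - 1 then
            X j * X (⟨r - 1, by omega⟩ : Fin m)
          else X j) :
        MvPolynomial (Fin m) ℂ →ₐ[ℂ] MvPolynomial (Fin m) ℂ)
      (Ideal.span
        ((Set.range fun i : Fin p =>
            (X (⟨i.1, by have := i.isLt; omega⟩ : Fin m) : MvPolynomial (Fin m) ℂ)) ∪
          (Set.range fun k : Fin (r - p) =>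
            (X (⟨p + k.1, by have := k.isLt; omega⟩ : Fin m) : MvPolynomial (Fin m) ℂ) *
              X (⟨r + k.1, by have := k.isLt; omega⟩ : Fin m))))
    = Ideal.span {(X (⟨r - 1, by omega⟩ : Fin m) : MvPolynomial (Fin m) ℂ)} *
        Ideal.span
          ((Set.range fun i : Fin p =>
              (X (⟨i.1, by have := i.isLt; omega⟩ : Fin m) : MvPolynomial (Fin m) ℂ)) ∪
            (Set.range fun k : Fin (r - p - 1) =>
              (X (⟨p + k.1, by have := k.isLt; omega⟩ : Fin m) : MvPolynomial (Fin m) ℂ) *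
                X (⟨r + k.1, by have := k.isLt; omega⟩ : Fin m)) ∪
            {(X (⟨2 * r - p - 1, by omega⟩ : Fin m) : MvPolynomial (Fin m) ℂ)}) := by
  apply Ideal.map_span_eq_span_singleton_mul
  apply Set.Subset.antisymm
  · rintro _ ⟨g, ⟨⟨i, hi⟩, rfl⟩ | ⟨⟨k, hk⟩, rfl⟩, rfl⟩
    · refine ⟨_, .inl (.inl ⟨⟨i, hi⟩, rfl⟩), ?_⟩
      simp [show i < r - 1 by omega, mul_comm]
    · by_cases hk' : k < r - p - 1
      · refine ⟨_, .inl (.inr ⟨⟨k, hk'⟩, rfl⟩), ?_⟩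
        simp [show p + k < r - 1 by omega, show ¬ r + k < r - 1 by omega]
        ring
      · refine ⟨_, .inr (Set.mem_singleton _), ?_⟩
        have hpk : p + k = r - 1 := by omega
        have hrk : r + k = 2 * r - p - 1 := by omega
        simp [hpk, hrk, show ¬ 2 * r - p - 1 < r - 1 by omega]
  · rintro _ ⟨g, (⟨⟨i, hi⟩, rfl⟩ | ⟨⟨k, hk⟩, rfl⟩) | rfl, rfl⟩
    · refine ⟨_, .inl ⟨⟨i, hi⟩, rfl⟩, ?_⟩
      simp [show i < r - 1 by omega, mul_comm]
    · refine ⟨_, .inr ⟨⟨k, by omega⟩, rfl⟩, ?_⟩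
      simp [show p + k < r - 1 by omega, show ¬ r + k < r - 1 by omega]
      ring
    · refine ⟨_, .inr ⟨⟨r - p - 1, by omega⟩, rfl⟩, ?_⟩
      have hpk : p + (r - p - 1) = r - 1 := by omega
      have hrk : r + (r - p - 1) = 2 * r - p - 1 := by omega
      simp [hpk, hrk, show ¬ 2 * r - p - 1 < r - 1 by omega]
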